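/- arXiv:2501.15952 — 2 statements merged into one kernel-verified Lean document; each statement's English description precedes it below -/
import Mathlib

section
/- Let G be a graph and S⊆V(G) a set satisfying (H1) and (H2). Let e be an edge of G[S] with B_e nonempty. Then every supergraph of a prison P in G that contains an edge of B_e satisfies P ⊆ V(B_e) ∪ S, where V(B_e) denotes the set of endpoints of edges in B_e. -/
/-!
Let `cd ∈ B_e` lie in a supergraph `P` of a prison and let `z ∈ P \ (S ∪ {c, d})`. Each bad
case is ruled out by an induced prison with at most one edge inside `S`, against (H2). The
non-adjacent pairs of `P` lie within three of its vertices, so at least two vertices of `P` are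
adjacent to all of `P`. If `z` were adjacent to neither `c` nor `d`, two such vertices together
with `c, d, z` would induce such a prison. As `cd` lies in no triangle of `G − S`, `z` is thus
adjacent to exactly one of `c, d`, say `c`, and some `x ∈ P` is adjacent to `c`, `d` and `z`.
With the help of `x`, each of `z ≁ a`, `z ≁ b`, and a triangle of `G − S` on `zc` again yields
such a prison, so `zc ∈ B_e`.
-/

namespace PrisonFreePaper

variable {V : Type*}

/-- The prison graph on 5 vertices: `K₅` minus the two edges `{4,2}` and `{4,3}`
(which share the vertex `4`).  Thus `{0,1,2,3}` is a 4-clique and the vertex `4`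
is adjacent exactly to `0` and `1`. -/
def prison : SimpleGraph (Fin 5) where
  Adj a b := a ≠ b ∧ ¬((a = 4 ∧ (b = 2 ∨ b = 3)) ∨ (b = 4 ∧ (a = 2 ∨ a = 3)))
  symm := by
    constructor
    rintro a b ⟨h1, h2⟩
    exact ⟨h1.symm, by tauto⟩
  loopless := by
    constructor
    rintro a ⟨h, _⟩
    exact h rfl

/-- `P` is a 5-vertex set inducing a subgraph of `G` isomorphic to the prison. -/
def InducesPrison (G : SimpleGraph V) (P : Set V) : Prop :=
  ∃ f : Fin 5 ↪ V, Set.range f = P ∧ ∀ a b, G.Adj (f a) (f b) ↔ prison.Adj a b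

/-- `G` is prison-free: no 5-vertex set induces a prison. -/
def PrisonFree (G : SimpleGraph V) : Prop :=
  ¬ ∃ P : Set V, InducesPrison G P

/-- `P` is the set of classes witnessing that the induced subgraph `G[F]` is
complete multipartite: the classes are nonempty, pairwise disjoint, their union
is `F`, and two vertices of `F` are adjacent iff they lie in different classes. -/
def IsCMP (G : SimpleGraph V) (F : Set V) (P : Set (Set V)) : Prop :=
  (∀ C ∈ P, C.Nonempty ∧ C ⊆ F) ∧
  (⋃₀ P = F) ∧
  (∀ C ∈ P, ∀ D ∈ P, C ≠ D → Disjoint C D) ∧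
  (∀ u ∈ F, ∀ v ∈ F, (G.Adj u v ↔ ¬ ∃ C ∈ P, u ∈ C ∧ v ∈ C))

/-- The induced subgraph `G[F]` is complete multipartite. -/
def CMP (G : SimpleGraph V) (F : Set V) : Prop := ∃ P, IsCMP G F P

/-- The induced subgraph `G[F]` is complete multipartite with at least `p` classes. -/
def CMPAtLeast (G : SimpleGraph V) (F : Set V) (p : ℕ) : Prop :=
  ∃ P, IsCMP G F P ∧ ∃ f : Fin p ↪ Set V, ∀ i, f i ∈ P

/-- `F ∈ cmd_p` of the induced subgraph of `G` on the ground set `W`: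
`F` is an inclusion-wise maximal subset of `W` inducing a complete multipartite
graph with at least `p` classes. -/
def Cmd (G : SimpleGraph V) (W : Set V) (p : ℕ) (F : Set V) : Prop :=
  F ⊆ W ∧ CMPAtLeast G F p ∧
    ∀ F', F' ⊆ W → F ⊆ F' → CMPAtLeast G F' p → F' = F

/-- The neighbourhood of `v` in `G` intersects at most one class of `P`. -/
def MeetsAtMostOneClass (G : SimpleGraph V) (P : Set (Set V)) (v : V) : Prop :=
  ∀ C ∈ P, ∀ D ∈ P, (∃ x ∈ C, G.Adj v x) → (∃ y ∈ D, G.Adj v y) → C = D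

/-- The induced subgraph `G[X]`, viewed as a graph on the same vertex set
(only edges with both endpoints in `X` are kept). -/
def inducedOn (G : SimpleGraph V) (X : Set V) : SimpleGraph V where
  Adj a b := G.Adj a b ∧ a ∈ X ∧ b ∈ X
  symm := by constructor; rintro a b ⟨h, ha, hb⟩; exact ⟨h.symm, hb, ha⟩
  loopless := by constructor; rintro a ⟨h, _⟩; exact G.irrefl h

/-- The set of edges of `G` with both endpoints in `X`, i.e. the edges of `G[X]`. -/
def edgesWithin (G : SimpleGraph V) (X : Set V) : Set (Sym2 V) :=
  (inducedOn G X).edgeSet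

/-- `(G,k)` is a yes-instance of Prison-Free Edge Deletion. -/
def DeletionYes (G : SimpleGraph V) (k : ℕ) : Prop :=
  ∃ A : Set (Sym2 V), A ⊆ G.edgeSet ∧ A.Finite ∧ A.ncard ≤ k ∧
    PrisonFree (G.deleteEdges A)

/-- `P` is a strict supergraph of a prison in `G`: a 5-vertex set whose induced
subgraph is `K₅` or `K₅` minus one edge (at most one non-adjacent pair). -/
def StrictSupPrison (G : SimpleGraph V) (P : Set V) : Prop :=
  P.ncard = 5 ∧ ∃ u v : V, ∀ x ∈ P, ∀ y ∈ P, x ≠ y → ¬ G.Adj x y →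
    (x = u ∧ y = v) ∨ (x = v ∧ y = u)

/-- `P` is a supergraph of a prison in `G`: a 5-vertex set whose induced subgraph
contains a prison on `P` as a spanning subgraph, i.e. all non-adjacent pairs in `P`
are among two pairs sharing a common vertex. -/
def SupPrison (G : SimpleGraph V) (P : Set V) : Prop :=
  P.ncard = 5 ∧ ∃ w u v : V, ∀ x ∈ P, ∀ y ∈ P, x ≠ y → ¬ G.Adj x y →
    (({x, y} : Set V) = {w, u} ∨ ({x, y} : Set V) = {w, v})

/-- Hypothesis (H1): every edge of `G` that does not have both endpoints in `S`
is contained in a strict supergraph of a prison in `G`. -/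
def H1 (G : SimpleGraph V) (S : Set V) : Prop :=
  ∀ u v : V, G.Adj u v → ¬(u ∈ S ∧ v ∈ S) →
    ∃ P, StrictSupPrison G P ∧ u ∈ P ∧ v ∈ P

/-- Hypothesis (H2): every 5-vertex set inducing a prison in `G` contains at least
two edges with both endpoints in `S`. -/
def H2 (G : SimpleGraph V) (S : Set V) : Prop :=
  ∀ P, InducesPrison G P →
    ∃ e₁ e₂ : Sym2 V, e₁ ≠ e₂ ∧ e₁ ∈ edgesWithin G (P ∩ S) ∧ e₂ ∈ edgesWithin G (P ∩ S)

/-- `B`: the edges of `G−S` lying in no triangle of `G−S`. -/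
def BSet (G : SimpleGraph V) (S : Set V) : Set (Sym2 V) :=
  {e ∈ edgesWithin G Sᶜ | ¬ ∃ w ∈ Sᶜ, ∀ x ∈ e, G.Adj w x}

/-- `B_e` for the edge `e = ab` of `G[S]`: the edges of `B` both of whose endpoints
are adjacent in `G` to both `a` and `b`. -/
def BOf (G : SimpleGraph V) (S : Set V) (a b : V) : Set (Sym2 V) :=
  {f ∈ BSet G S | ∀ x ∈ f, G.Adj x a ∧ G.Adj x b}

/-- `V(B_e)`: the set of endpoints of the edges of `B_e`. -/
def BVerts (G : SimpleGraph V) (S : Set V) (a b : V) : Set V :=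
  {x | ∃ f ∈ BOf G S a b, x ∈ f}

/-- The graph `G ∪ A` obtained by adding the pairs in `A` as edges. -/
def addEdges (G : SimpleGraph V) (A : Set (Sym2 V)) : SimpleGraph V :=
  G ⊔ SimpleGraph.fromEdgeSet A

/-- `A` is a prison-free completion set for `G`: a set of non-edges (unordered
pairs of distinct vertices not adjacent in `G`) whose addition makes `G` prison-free. -/
def CompletionSet (G : SimpleGraph V) (A : Set (Sym2 V)) : Prop :=
  (∀ e ∈ A, ¬ e.IsDiag) ∧ (∀ e ∈ A, e ∉ G.edgeSet) ∧ PrisonFree (addEdges G A)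

/-- `A` is a minimal prison-free completion set for `G`. -/
def MinCompletionSet (G : SimpleGraph V) (A : Set (Sym2 V)) : Prop :=
  CompletionSet G A ∧ ∀ A' ⊂ A, ¬ CompletionSet G A'

/-- `A` is a solution to the instance `(G,k)` of Prison-Free Edge Completion:
a prison-free completion set of size at most `k`. -/
def Solution (G : SimpleGraph V) (k : ℕ) (A : Set (Sym2 V)) : Prop :=
  CompletionSet G A ∧ A.Finite ∧ A.ncard ≤ k

/-- `A` is a minimal solution to `(G,k)`: a solution no proper subset of which is a
prison-free completion set. -/
def MinSolution (G : SimpleGraph V) (k : ℕ) (A : Set (Sym2 V)) : Prop :=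
  Solution G k A ∧ ∀ A' ⊂ A, ¬ CompletionSet G A'

/-- `K` is a set of 4 vertices inducing a complete graph `K₄` in `G`. -/
def IsK4 (G : SimpleGraph V) (K : Set V) : Prop :=
  K.ncard = 4 ∧ ∀ u ∈ K, ∀ v ∈ K, u ≠ v → G.Adj u v

/-- The modulator property of the set `S` (output of the sunflower-based
Lemma): for every prison `P` in `G` and every edge set `A ⊆ E(G)` with `|A| ≤ k`,
if deleting `A` from `G[S]` yields a prison-free graph then `A` contains an edge
of `G[P]`. -/
def GoodModulator (G : SimpleGraph V) (k : ℕ) (S : Set V) : Prop :=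
  ∀ P : Set V, InducesPrison G P →
    ∀ A : Set (Sym2 V), A ⊆ G.edgeSet → A.Finite → A.ncard ≤ k →
      PrisonFree ((inducedOn G S).deleteEdges A) →
      ∃ e ∈ A, e ∈ edgesWithin G P

/-- Hypothesis (H3): for every `F' ∈ cmd₃(G−S)` and every inclusion-wise maximal
set `F ⊇ F'` such that `G[F]` is complete multipartite, some vertex outside `F`
has neighbours in at least two classes of `F`. -/
def H3 (G : SimpleGraph V) (S : Set V) : Prop :=
  ∀ F', Cmd G Sᶜ 3 F' → ∀ F : Set V, F' ⊆ F → CMP G F →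
    (∀ F'', F ⊆ F'' → CMP G F'' → F'' = F) →
    ∃ v ∉ F, ∃ P, IsCMP G F P ∧
      ∃ C ∈ P, ∃ D ∈ P, C ≠ D ∧ (∃ x ∈ C, G.Adj v x) ∧ ∃ y ∈ D, G.Adj v y

/-- `F` is an inclusion-wise maximal subset of `W` inducing a complete
multipartite subgraph of `G`. -/
def MaxCMPon (G : SimpleGraph V) (W F : Set V) : Prop :=
  F ⊆ W ∧ CMP G F ∧ ∀ F'', F'' ⊆ W → F ⊆ F'' → CMP G F'' → F'' = F

section

variable {G : SimpleGraph V} {S : Set V} {a b c d z x : V} {P : Set V}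

lemma inducesPrison_of_adj {v₀ v₁ v₂ v₃ v₄ : V}
    (h01 : G.Adj v₀ v₁) (h02 : G.Adj v₀ v₂) (h03 : G.Adj v₀ v₃)
    (h12 : G.Adj v₁ v₂) (h13 : G.Adj v₁ v₃) (h23 : G.Adj v₂ v₃)
    (h40 : G.Adj v₄ v₀) (h41 : G.Adj v₄ v₁) (h42 : Gᶜ.Adj v₄ v₂) (h43 : Gᶜ.Adj v₄ v₃) :
    InducesPrison G {v₀, v₁, v₂, v₃, v₄} := by
  let f : Fin 5 → V := ![v₀, v₁, v₂, v₃, v₄]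
  have hadj : ∀ i j, G.Adj (f i) (f j) ↔ prison.Adj i j := by
    intro i j
    fin_cases i <;> fin_cases j <;>
      simp [f, prison, h01, h02, h03, h12, h13, h23, h40, h41, h42.2, h43.2, h01.symm, h02.symm,
        h03.symm, h12.symm, h13.symm, h23.symm, h40.symm, h41.symm, G.adj_comm v₂ v₄,
        G.adj_comm v₃ v₄]
  have hinj : f.Injective := by
    intro i j hij
    fin_cases i <;> fin_cases j <;>
      simp_all [f, h01.ne, h02.ne, h03.ne, h12.ne, h13.ne, h23.ne, h40.ne, h41.ne, h01.ne',
        h02.ne', h03.ne', h12.ne', h13.ne', h23.ne', h40.ne', h41.ne', h42.ne', h43.ne']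
  refine ⟨⟨f, hinj⟩, ?_, hadj⟩
  ext x
  simp [f, eq_comm, or_comm, or_left_comm]

lemma edgesWithin_subset_singleton_of_subset_pair {X : Set V} (hX : X ⊆ {a, b}) :
    edgesWithin G X ⊆ {s(a, b)} := by
  intro e
  induction e using Sym2.ind with | h u w => ?_
  intro he
  obtain ⟨huw, hu, hw⟩ : G.Adj u w ∧ u ∈ X ∧ w ∈ X := he
  have := huw.ne
  rcases hX hu with rfl | rfl <;> rcases hX hw with rfl | rfl <;> simp_all [Sym2.eq_swap]

lemma edgesWithin_subset_singleton_of_subset_triple {X : Set V} (hX : X ⊆ {a, b, x})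
    (hax : ¬ G.Adj a x) (hbx : ¬ G.Adj b x) : edgesWithin G X ⊆ {s(a, b)} := by
  intro e
  induction e using Sym2.ind with | h u w => ?_
  intro he
  obtain ⟨huw, hu, hw⟩ : G.Adj u w ∧ u ∈ X ∧ w ∈ X := he
  have := huw.ne
  have hxa : ¬ G.Adj x a := fun h => hax h.symm
  have hxb : ¬ G.Adj x b := fun h => hbx h.symm
  rcases hX hu with rfl | rfl | rfl <;> rcases hX hw with rfl | rfl | rfl <;>
    simp_all [Sym2.eq_swap]

lemma H2.not_subsingleton (h2 : H2 G S) {Q : Set V} (hQ : InducesPrison G Q) :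
    ¬ (edgesWithin G (Q ∩ S)).Subsingleton := by
  obtain ⟨e₁, e₂, hne, he₁, he₂⟩ := h2 Q hQ
  exact fun h => hne (h he₁ he₂)

lemma H2.not_inter_subset_pair (h2 : H2 G S) {Q : Set V} (hQ : InducesPrison G Q) :
    ¬ Q ∩ S ⊆ {a, b} := fun hQS =>
  h2.not_subsingleton hQ
    (Set.subsingleton_singleton.anti (edgesWithin_subset_singleton_of_subset_pair hQS))

lemma H2.not_inter_subset_triple (h2 : H2 G S) {Q : Set V} (hQ : InducesPrison G Q)
    (hax : ¬ G.Adj a x) (hbx : ¬ G.Adj b x) : ¬ Q ∩ S ⊆ {a, b, x} := fun hQS =>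
  h2.not_subsingleton hQ
    (Set.subsingleton_singleton.anti (edgesWithin_subset_singleton_of_subset_triple hQS hax hbx))

lemma SupPrison.exists_adj_of_notMem (hP : SupPrison G P) :
    ∃ N : Set V, N.Finite ∧ N.ncard ≤ 3 ∧ ∀ x ∈ P, x ∉ N → ∀ y ∈ P, x ≠ y → G.Adj x y := by
  classical
  obtain ⟨-, w, u, v, hmiss⟩ := hP
  refine ⟨↑({w, u, v} : Finset V), Finset.finite_toSet _,
    (Set.ncard_coe_finset _).trans_le Finset.card_le_three, fun x hx hxN y hy hxy => ?_⟩
  by_contra hn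
  have hx' : x ∈ ({x, y} : Set V) := Set.mem_insert x {y}
  rcases hmiss x hx y hy hxy hn with h | h <;> rw [h] at hx' <;> simp_all

lemma mk_mem_BSet_iff : s(c, d) ∈ BSet G S ↔
    G.Adj c d ∧ c ∉ S ∧ d ∉ S ∧ ∀ t ∉ S, G.Adj t c → ¬ G.Adj t d := by
  simp only [BSet, edgesWithin, Set.mem_sep_iff, SimpleGraph.mem_edgeSet, Sym2.forall_mem_pair]
  exact ⟨fun ⟨⟨h, hc, hd⟩, ht⟩ => ⟨h, hc, hd, fun t htS htc htd => ht ⟨t, htS, htc, htd⟩⟩,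
    fun ⟨h, hc, hd, ht⟩ => ⟨⟨h, hc, hd⟩, fun ⟨t, htS, htc, htd⟩ => ht t htS htc htd⟩⟩

lemma mk_mem_BOf_iff : s(c, d) ∈ BOf G S a b ↔
    s(c, d) ∈ BSet G S ∧ (G.Adj c a ∧ G.Adj c b) ∧ (G.Adj d a ∧ G.Adj d b) := by
  simp only [BOf, Set.mem_sep_iff, Sym2.forall_mem_pair]

lemma BOf_comm : BOf G S a b = BOf G S b a := by
  ext f
  simp only [BOf, Set.mem_sep_iff, and_comm]

lemma H2.adj_of_mem_BOf (h2 : H2 G S) (ha : a ∈ S) (hb : b ∈ S) (hab : G.Adj a b)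
    (hcd : s(c, d) ∈ BOf G S a b) (hzS : z ∉ S) (hzc : G.Adj z c) (hzd : Gᶜ.Adj z d)
    (hxc : G.Adj x c) (hxd : G.Adj x d) (hxz : G.Adj x z) : G.Adj z a := by
  obtain ⟨hB, ⟨hca, hcb⟩, hda, hdb⟩ := mk_mem_BOf_iff.1 hcd
  obtain ⟨hcd, hcS, hdS, -⟩ := mk_mem_BSet_iff.1 hB
  by_contra hza
  have hza' : Gᶜ.Adj z a := ⟨fun h => hzS (h ▸ ha), hza⟩
  have hzb : Gᶜ.Adj z b := ⟨fun h => hzS (h ▸ hb), fun hzb => h2.not_inter_subset_pair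
    (inducesPrison_of_adj hcb.symm hab.symm hdb.symm hca hcd hda.symm hzb hzc hza' hzd)
    (a := a) (b := b) (by grind)⟩
  have hax : Gᶜ.Adj a x := ⟨fun h => hza (h ▸ hxz).symm, fun hax => h2.not_inter_subset_pair
    (inducesPrison_of_adj hxc.symm hca hcd hax.symm hxd hda.symm hzc hxz.symm hza' hzd)
    (a := a) (b := x) (by grind)⟩
  have hbx : Gᶜ.Adj b x := ⟨fun h => hzb.2 (h ▸ hxz).symm, fun hbx => h2.not_inter_subset_pair
    (inducesPrison_of_adj hxc.symm hcb hcd hbx.symm hxd hdb.symm hzc hxz.symm hzb hzd)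
    (a := b) (b := x) (by grind)⟩
  exact h2.not_inter_subset_triple
    (inducesPrison_of_adj hcd hca hcb hda hdb hab hxc hxd hax.symm hbx.symm) hax.2 hbx.2
    (by grind)

lemma H2.mk_mem_BOf_of_adj (h2 : H2 G S) (ha : a ∈ S) (hb : b ∈ S) (hab : G.Adj a b)
    (hcd : s(c, d) ∈ BOf G S a b) (hzS : z ∉ S) (hzc : G.Adj z c) (hzd : Gᶜ.Adj z d)
    (hxc : G.Adj x c) (hxd : G.Adj x d) (hxz : G.Adj x z) : s(z, c) ∈ BOf G S a b := by
  have hza := h2.adj_of_mem_BOf ha hb hab hcd hzS hzc hzd hxc hxd hxz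
  have hzb := h2.adj_of_mem_BOf hb ha hab.symm (BOf_comm ▸ hcd) hzS hzc hzd hxc hxd hxz
  obtain ⟨hB, ⟨hca, hcb⟩, hda, hdb⟩ := mk_mem_BOf_iff.1 hcd
  obtain ⟨hcd, hcS, hdS, hcd_tri⟩ := mk_mem_BSet_iff.1 hB
  refine mk_mem_BOf_iff.2 ⟨mk_mem_BSet_iff.2 ⟨hzc, hzS, hcS, fun t htS htz htc => ?_⟩,
    ⟨hza, hzb⟩, hca, hcb⟩
  have htd : Gᶜ.Adj t d := ⟨fun h => hzd.2 (h ▸ htz).symm, hcd_tri t htS htc⟩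
  have hta : t ≠ a := fun h => htS (h ▸ ha)
  have htb : t ≠ b := fun h => htS (h ▸ hb)
  by_cases hta' : G.Adj t a <;> by_cases htb' : G.Adj t b
  · exact h2.not_inter_subset_pair (a := a) (b := b)
      (inducesPrison_of_adj hab hza.symm hta'.symm hzb.symm htb'.symm htz.symm hda hdb
        hzd.symm htd.symm) (by grind)
  · exact h2.not_inter_subset_pair (a := a) (b := b)
      (inducesPrison_of_adj hca.symm hab hda.symm hcb hcd hdb.symm hta' htc ⟨htb, htb'⟩ htd)
      (by grind)
  · exact h2.not_inter_subset_pair (a := a) (b := b)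
      (inducesPrison_of_adj hcb.symm hab.symm hdb.symm hca hcd hda.symm htb' htc ⟨hta, hta'⟩ htd)
      (by grind)
  · exact h2.not_inter_subset_pair (a := a) (b := b)
      (inducesPrison_of_adj hzc hza hzb hca hcb hab htz htc ⟨hta, hta'⟩ ⟨htb, htb'⟩) (by grind)

lemma H2.mem_BVerts_of_adj (h2 : H2 G S) (ha : a ∈ S) (hb : b ∈ S) (hab : G.Adj a b)
    (hP : SupPrison G P) (hcd : s(c, d) ∈ BOf G S a b) (hc : c ∈ P) (hd : d ∈ P) (hz : z ∈ P)
    (hzS : z ∉ S) (hzc : G.Adj z c) : z ∈ BVerts G S a b := by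
  by_cases hzd : z = d
  · exact ⟨s(c, d), hcd, hzd ▸ Sym2.mem_mk_right c d⟩
  obtain ⟨-, -, -, hcd_tri⟩ := mk_mem_BSet_iff.1 (mk_mem_BOf_iff.1 hcd).1
  have hzd' : Gᶜ.Adj z d := ⟨hzd, hcd_tri z hzS hzc⟩
  obtain ⟨N, hNfin, hN3, hN⟩ := hP.exists_adj_of_notMem
  have hzN : z ∈ N := by_contra fun h => hzd'.2 (hN z hz h d hd hzd)
  have hdN : d ∈ N := by_contra fun h => hzd'.2 (hN d hd h z hz (Ne.symm hzd)).symm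
  obtain ⟨x, hx, hxcN⟩ : ∃ x ∈ P, x ∉ insert c N := by
    refine Set.exists_mem_notMem_of_ncard_lt_ncard ?_ (hNfin.insert c)
    have := Set.ncard_insert_le c N
    have := hP.1
    omega
  obtain ⟨hxc, hxN⟩ := not_or.1 hxcN
  have hxne : ∀ w ∈ N, x ≠ w := fun w hw h => hxN (h ▸ hw)
  exact ⟨s(z, c), h2.mk_mem_BOf_of_adj ha hb hab hcd hzS hzc hzd' (hN x hx hxN c hc hxc)
    (hN x hx hxN d hd (hxne d hdN)) (hN x hx hxN z hz (hxne z hzN)), Sym2.mem_mk_left z c⟩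

lemma H2.adj_or_adj_of_mem_BSet (h2 : H2 G S) (hP : SupPrison G P) (hcd : s(c, d) ∈ BSet G S)
    (hc : c ∈ P) (hd : d ∈ P) (hz : z ∈ P) (hzS : z ∉ S) : G.Adj z c ∨ G.Adj z d := by
  obtain ⟨hcd, hcS, hdS, -⟩ := mk_mem_BSet_iff.1 hcd
  by_contra! hzcd
  have hzc : Gᶜ.Adj z c := ⟨fun h => hzcd.2 (h ▸ hcd), hzcd.1⟩
  have hzd : Gᶜ.Adj z d := ⟨fun h => hzcd.1 (h ▸ hcd.symm), hzcd.2⟩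
  obtain ⟨N, hNfin, hN3, hN⟩ := hP.exists_adj_of_notMem
  have hzN : z ∈ N := by_contra fun h => hzc.2 (hN z hz h c hc hzc.1)
  have hcN : c ∈ N := by_contra fun h => hzc.2 (hN c hc h z hz hzc.1.symm).symm
  have hdN : d ∈ N := by_contra fun h => hzd.2 (hN d hd h z hz hzd.1.symm).symm
  obtain ⟨x, hx, hxN⟩ : ∃ x ∈ P, x ∉ N :=
    Set.exists_mem_notMem_of_ncard_lt_ncard (by have := hP.1; omega) hNfin
  obtain ⟨y, hy, hyxN⟩ : ∃ y ∈ P, y ∉ insert x N := by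
    refine Set.exists_mem_notMem_of_ncard_lt_ncard ?_ (hNfin.insert x)
    have := Set.ncard_insert_le x N
    have := hP.1
    omega
  obtain ⟨hyx, hyN⟩ := not_or.1 hyxN
  have hxne : ∀ w ∈ N, x ≠ w := fun w hw h => hxN (h ▸ hw)
  have hyne : ∀ w ∈ N, y ≠ w := fun w hw h => hyN (h ▸ hw)
  exact h2.not_inter_subset_pair (a := x) (b := y)
    (inducesPrison_of_adj (hN x hx hxN y hy (Ne.symm hyx)) (hN x hx hxN c hc (hxne c hcN))
      (hN x hx hxN d hd (hxne d hdN)) (hN y hy hyN c hc (hyne c hcN))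
      (hN y hy hyN d hd (hyne d hdN)) hcd (hN x hx hxN z hz (hxne z hzN)).symm
      (hN y hy hyN z hz (hyne z hzN)).symm hzc hzd) (by grind)

end

theorem noCrossPrison2_general {V : Type*} (G : SimpleGraph V)
    (S : Set V) (h2 : H2 G S)
    (a b : V) (ha : a ∈ S) (hb : b ∈ S) (hab : G.Adj a b)
    (P : Set V) (hP : SupPrison G P)
    (hedge : ∃ f ∈ BOf G S a b, ∀ x ∈ f, x ∈ P) :
    P ⊆ BVerts G S a b ∪ S := by
  obtain ⟨f, hf, hfP⟩ := hedge
  induction f using Sym2.ind with | h c d => ?_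
  have hc := hfP c (Sym2.mem_mk_left c d)
  have hd := hfP d (Sym2.mem_mk_right c d)
  intro z hz
  by_cases hzS : z ∈ S
  · exact Or.inr hzS
  rcases h2.adj_or_adj_of_mem_BSet hP (mk_mem_BOf_iff.1 hf).1 hc hd hz hzS with hzc | hzd
  · exact Or.inl (h2.mem_BVerts_of_adj ha hb hab hP hf hc hd hz hzS hzc)
  · exact Or.inl (h2.mem_BVerts_of_adj ha hb hab hP (Sym2.eq_swap ▸ hf) hd hc hz hzS hzd)

/-- Under (H1) and (H2), if `B_e` is nonempty for the edge
`e = ab` of `G[S]`, then every supergraph of a prison in `G` containing an edge of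
`B_e` is contained in `V(B_e) ∪ S`. -/
theorem noCrossPrison2 {V : Type*} [Fintype V] (G : SimpleGraph V)
    (S : Set V) (h1 : H1 G S) (h2 : H2 G S)
    (a b : V) (ha : a ∈ S) (hb : b ∈ S) (hab : G.Adj a b)
    (hne : (BOf G S a b).Nonempty)
    (P : Set V) (hP : SupPrison G P)
    (hedge : ∃ f ∈ BOf G S a b, ∀ x ∈ f, x ∈ P) :
    P ⊆ BVerts G S a b ∪ S :=
  noCrossPrison2_general G S h2 a b ha hb hab P hP hedge

end PrisonFreePaper
end

section
/- Let G be a graph, S⊆V(G), and F'∈cmd_3(G−S). Suppose F⊆V(G) is an inclusion-wise maximal set such that G[F] is complete multipartite, F⊇F', and every vertex v∈V(G)∖F has neighbors in at most one class of F. Then for every k∈ℕ: (G,k) is a yes-instance of Prison-Free Edge Deletion if and only if (G', k) is a yes-instance, where G' is obtained from G by deleting all edges of G[F]. -/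
namespace PrisonFreePaper

variable {V : Type*}

/-!
Let `P` be the classes of `F`. A vertex outside `F` sees at most one class, so two vertices of
`F` lying in different classes (i.e. adjacent) have no common neighbour outside `F`. In the prison
every two vertices have a common neighbour, and every edge has both `0` and `1` in its closed
common neighbourhood; from this one sees that an induced prison of `G`, and likewise one of `G`
minus the edges of `G[F]`, meets `F` in an independent set of `G`. Such a prison is therefore left
untouched by deleting any set of edges of `G[F]`, so a solution `A` for `G` gives the solution
`A \ E(G[F])` for the reduced instance, and a solution there is a solution for `G`.
-/

instance : DecidableRel prison.Adj := fun a b =>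
  inferInstanceAs (Decidable (a ≠ b ∧ ¬((a = 4 ∧ (b = 2 ∨ b = 3)) ∨ (b = 4 ∧ (a = 2 ∨ a = 3)))))

theorem prison_exists_common_adj : ∀ i j : Fin 5, i ≠ j → ∃ m, prison.Adj m i ∧ prison.Adj m j := by
  decide

theorem prison_adj_zero_one_of_two_le : ∀ m : Fin 5, 2 ≤ m → prison.Adj m 0 ∧ prison.Adj m 1 := by
  decide

theorem prison_eq_or_common_adj_of_adj : ∀ i j : Fin 5, prison.Adj i j → ∀ m : Fin 5, m ≤ 1 →
    m = i ∨ m = j ∨ (prison.Adj m i ∧ prison.Adj m j) := by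
  decide

theorem InducesPrison.congr_adj {G₁ G₂ : SimpleGraph V} {Q : Set V} (hQ : InducesPrison G₁ Q)
    (h : ∀ x ∈ Q, ∀ y ∈ Q, G₁.Adj x y ↔ G₂.Adj x y) : InducesPrison G₂ Q := by
  obtain ⟨f, rfl, hf⟩ := hQ
  exact ⟨f, rfl, fun a b => (h _ ⟨a, rfl⟩ _ ⟨b, rfl⟩).symm.trans (hf a b)⟩

theorem PrisonFree.of_inducesPrison_imp {G₁ G₂ : SimpleGraph V} (hG₁ : PrisonFree G₁)
    (h : ∀ Q, InducesPrison G₂ Q → InducesPrison G₁ Q) : PrisonFree G₂ :=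
  fun ⟨Q, hQ⟩ => hG₁ ⟨Q, h Q hQ⟩

theorem deleteEdges_comm (G : SimpleGraph V) (s t : Set (Sym2 V)) :
    (G.deleteEdges s).deleteEdges t = (G.deleteEdges t).deleteEdges s := by
  rw [SimpleGraph.deleteEdges_deleteEdges, SimpleGraph.deleteEdges_deleteEdges, Set.union_comm]

section EdgesWithin

variable {G : SimpleGraph V} {F : Set V}

@[simp]
theorem mem_edgesWithin {u v : V} : s(u, v) ∈ edgesWithin G F ↔ G.Adj u v ∧ u ∈ F ∧ v ∈ F :=
  Iff.rfl

theorem deleteEdges_adj_iff_of_subset_edgesWithin {D : Set (Sym2 V)} (hD : D ⊆ edgesWithin G F)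
    {x y : V} (hxy : x ∈ F → y ∈ F → ¬G.Adj x y) : (G.deleteEdges D).Adj x y ↔ G.Adj x y := by
  rw [SimpleGraph.deleteEdges_adj, and_iff_left_iff_imp]
  intro h hxyD
  obtain ⟨-, hx, hy⟩ := mem_edgesWithin.mp (hD hxyD)
  exact hxy hx hy h

theorem deleteEdges_adj_iff_of_disjoint_edgesWithin {A : Set (Sym2 V)}
    (hA : Disjoint A (edgesWithin G F)) {x y : V} (hx : x ∈ F) (hy : y ∈ F) :
    (G.deleteEdges A).Adj x y ↔ G.Adj x y := by
  rw [SimpleGraph.deleteEdges_adj, and_iff_left_iff_imp]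
  exact fun h hxyA => hA.notMem_of_mem_left hxyA (mem_edgesWithin.mpr ⟨h, hx, hy⟩)

theorem edgesWithin_deleteEdges_of_disjoint {A : Set (Sym2 V)} (hA : Disjoint A (edgesWithin G F)) :
    edgesWithin (G.deleteEdges A) F = edgesWithin G F := by
  ext e
  induction e using Sym2.ind with
  | h x y =>
    simp only [mem_edgesWithin]
    exact ⟨fun ⟨h, hx, hy⟩ => ⟨h.1, hx, hy⟩, fun ⟨h, hx, hy⟩ =>
      ⟨(deleteEdges_adj_iff_of_disjoint_edgesWithin hA hx hy).2 h, hx, hy⟩⟩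

end EdgesWithin

section CompleteMultipartite

variable {G : SimpleGraph V} {F : Set V} {P : Set (Set V)}

theorem IsCMP.exists_mem (hP : IsCMP G F P) {x : V} (hx : x ∈ F) : ∃ C ∈ P, x ∈ C :=
  Set.mem_sUnion.mp (hP.2.1 ▸ hx)

theorem IsCMP.not_adj_iff (hP : IsCMP G F P) {x y : V} (hx : x ∈ F) (hy : y ∈ F) :
    ¬G.Adj x y ↔ ∃ C ∈ P, x ∈ C ∧ y ∈ C := by
  rw [hP.2.2.2 x hx y hy, not_not]

theorem IsCMP.not_adj_trans (hP : IsCMP G F P) {x y z : V} (hx : x ∈ F) (hy : y ∈ F)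
    (hz : z ∈ F) (hxy : ¬G.Adj x y) (hyz : ¬G.Adj y z) : ¬G.Adj x z := by
  obtain ⟨C, hC, hxC, hyC⟩ := (hP.not_adj_iff hx hy).1 hxy
  obtain ⟨D, hD, hyD, hzD⟩ := (hP.not_adj_iff hy hz).1 hyz
  obtain rfl : C = D := by_contra fun hCD => Set.disjoint_left.mp (hP.2.2.1 C hC D hD hCD) hyC hyD
  exact (hP.not_adj_iff hx hz).2 ⟨C, hC, hxC, hzD⟩

theorem IsCMP.deleteEdges (hP : IsCMP G F P) {A : Set (Sym2 V)}
    (hA : Disjoint A (edgesWithin G F)) : IsCMP (G.deleteEdges A) F P :=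
  ⟨hP.1, hP.2.1, hP.2.2.1, fun u hu v hv =>
    (deleteEdges_adj_iff_of_disjoint_edgesWithin hA hu hv).trans (hP.2.2.2 u hu v hv)⟩

theorem MeetsAtMostOneClass.anti {G₁ G₂ : SimpleGraph V} (hle : G₁ ≤ G₂) {v : V}
    (h : MeetsAtMostOneClass G₂ P v) : MeetsAtMostOneClass G₁ P v :=
  fun C hC D hD ⟨x, hx, hvx⟩ ⟨y, hy, hvy⟩ => h C hC D hD ⟨x, hx, hle hvx⟩ ⟨y, hy, hle hvy⟩

end CompleteMultipartite

section OutsideMeetsOneClass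

variable {G : SimpleGraph V} {F : Set V} {P : Set (Set V)}
  (hP : IsCMP G F P) (hmeet : ∀ v ∉ F, MeetsAtMostOneClass G P v)
include hP hmeet

theorem not_adj_of_adj_of_adj_of_notMem {v x y : V} (hv : v ∉ F) (hx : x ∈ F) (hy : y ∈ F)
    (hvx : G.Adj v x) (hvy : G.Adj v y) : ¬G.Adj x y := by
  obtain ⟨C, hC, hxC⟩ := hP.exists_mem hx
  obtain ⟨D, hD, hyD⟩ := hP.exists_mem hy
  obtain rfl : C = D := hmeet v hv C hC D hD ⟨x, hxC, hvx⟩ ⟨y, hyD, hvy⟩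
  exact (hP.not_adj_iff hx hy).2 ⟨C, hC, hxC, hyD⟩

/-- Both `0` and `1` are forced into `F` by any edge inside `F`, and then so are their common
neighbours `2, 3, 4`; but non-adjacency is transitive in `G[F]`, while `2 ≁ 4 ≁ 3 ∼ 2`. -/
theorem not_adj_of_inducesPrison {f : Fin 5 ↪ V} (hf : ∀ a b, G.Adj (f a) (f b) ↔ prison.Adj a b)
    {i j : Fin 5} (hi : f i ∈ F) (hj : f j ∈ F) : ¬G.Adj (f i) (f j) := by
  intro hij
  have mem_of_common_adj : ∀ {m a b : Fin 5}, prison.Adj m a → prison.Adj m b → f a ∈ F →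
      f b ∈ F → prison.Adj a b → f m ∈ F := fun hma hmb ha hb hab => by_contra fun hm =>
    not_adj_of_adj_of_adj_of_notMem hP hmeet hm ha hb ((hf _ _).2 hma) ((hf _ _).2 hmb)
      ((hf _ _).2 hab)
  have hij' := (hf i j).1 hij
  have low : ∀ m : Fin 5, m ≤ 1 → f m ∈ F := fun m hm => by
    rcases prison_eq_or_common_adj_of_adj i j hij' m hm with rfl | rfl | ⟨hmi, hmj⟩
    exacts [hi, hj, mem_of_common_adj hmi hmj hi hj hij']
  have high : ∀ m : Fin 5, 2 ≤ m → f m ∈ F := fun m hm =>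
    mem_of_common_adj (prison_adj_zero_one_of_two_le m hm).1
      (prison_adj_zero_one_of_two_le m hm).2 (low 0 (by decide)) (low 1 (by decide)) (by decide)
  refine hP.not_adj_trans (high 2 (by decide)) (high 4 (by decide)) (high 3 (by decide))
    ?_ ?_ ((hf 2 3).2 (by decide)) <;> rw [hf] <;> decide

theorem not_adj_of_inducesPrison_deleteEdges {f : Fin 5 ↪ V}
    (hf : ∀ a b, (G.deleteEdges (edgesWithin G F)).Adj (f a) (f b) ↔ prison.Adj a b)
    {i j : Fin 5} (hi : f i ∈ F) (hj : f j ∈ F) : ¬G.Adj (f i) (f j) := by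
  intro hij
  obtain ⟨m, hmi, hmj⟩ := prison_exists_common_adj i j (fun h => hij.ne (congrArg f h))
  obtain ⟨hmi, hmiF⟩ := SimpleGraph.deleteEdges_adj.mp ((hf m i).2 hmi)
  have hm : f m ∉ F := fun hm => hmiF (mem_edgesWithin.mpr ⟨hmi, hm, hi⟩)
  have hmj := (SimpleGraph.deleteEdges_adj.mp ((hf m j).2 hmj)).1
  exact not_adj_of_adj_of_adj_of_notMem hP hmeet hm hi hj hmi hmj hij

theorem InducesPrison.deleteEdges_edgesWithin {Q : Set V} (hQ : InducesPrison G Q) :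
    InducesPrison (G.deleteEdges (edgesWithin G F)) Q := by
  obtain ⟨f, rfl, hf⟩ := hQ
  refine InducesPrison.congr_adj ⟨f, rfl, hf⟩ ?_
  rintro _ ⟨i, rfl⟩ _ ⟨j, rfl⟩
  exact (deleteEdges_adj_iff_of_subset_edgesWithin subset_rfl
    (not_adj_of_inducesPrison hP hmeet hf)).symm

theorem InducesPrison.deleteEdges_of_subset_edgesWithin {Q : Set V} {D : Set (Sym2 V)}
    (hQ : InducesPrison (G.deleteEdges (edgesWithin G F)) Q) (hD : D ⊆ edgesWithin G F) :
    InducesPrison (G.deleteEdges D) Q := by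
  obtain ⟨f, rfl, hf⟩ := hQ
  refine InducesPrison.congr_adj ⟨f, rfl, hf⟩ ?_
  rintro _ ⟨i, rfl⟩ _ ⟨j, rfl⟩
  have hF := not_adj_of_inducesPrison_deleteEdges hP hmeet hf (i := i) (j := j)
  rw [deleteEdges_adj_iff_of_subset_edgesWithin subset_rfl hF,
    deleteEdges_adj_iff_of_subset_edgesWithin hD hF]

theorem PrisonFree.of_deleteEdges_edgesWithin (h : PrisonFree (G.deleteEdges (edgesWithin G F))) :
    PrisonFree G :=
  h.of_inducesPrison_imp fun _ hQ => hQ.deleteEdges_edgesWithin hP hmeet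

theorem PrisonFree.deleteEdges_edgesWithin {D : Set (Sym2 V)} (hD : D ⊆ edgesWithin G F)
    (h : PrisonFree (G.deleteEdges D)) : PrisonFree (G.deleteEdges (edgesWithin G F)) :=
  h.of_inducesPrison_imp fun _ hQ => hQ.deleteEdges_of_subset_edgesWithin hP hmeet hD

theorem PrisonFree.deleteEdges_edgesWithin_deleteEdges_sdiff {A : Set (Sym2 V)}
    (h : PrisonFree (G.deleteEdges A)) :
    PrisonFree ((G.deleteEdges (edgesWithin G F)).deleteEdges (A \ edgesWithin G F)) := by
  have hdisj : Disjoint (A \ edgesWithin G F) (edgesWithin G F) := Set.disjoint_sdiff_left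
  have hE := edgesWithin_deleteEdges_of_disjoint hdisj
  have hpf := PrisonFree.deleteEdges_edgesWithin (hP.deleteEdges hdisj)
    (fun v hv => (hmeet v hv).anti (G.deleteEdges_le _)) (D := A ∩ edgesWithin G F)
    (hE.symm ▸ Set.inter_subset_right)
    (by rwa [SimpleGraph.deleteEdges_deleteEdges, Set.sdiff_union_inter])
  rwa [hE, deleteEdges_comm] at hpf

theorem PrisonFree.of_deleteEdges_edgesWithin_deleteEdges {A : Set (Sym2 V)}
    (hA : Disjoint A (edgesWithin G F))
    (h : PrisonFree ((G.deleteEdges (edgesWithin G F)).deleteEdges A)) :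
    PrisonFree (G.deleteEdges A) := by
  refine .of_deleteEdges_edgesWithin (hP.deleteEdges hA)
    (fun v hv => (hmeet v hv).anti (G.deleteEdges_le _)) ?_
  rwa [edgesWithin_deleteEdges_of_disjoint hA, deleteEdges_comm]

end OutsideMeetsOneClass

theorem rule_buble_safe_general {V : Type*} (G : SimpleGraph V) (F : Set V)
    (hcmp : ∃ P : Set (Set V), IsCMP G F P ∧
      ∀ v ∉ F, MeetsAtMostOneClass G P v) :
    ∀ k : ℕ, DeletionYes G k ↔ DeletionYes (G.deleteEdges (edgesWithin G F)) k := by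
  obtain ⟨P, hP, hmeet⟩ := hcmp
  intro k
  constructor
  · rintro ⟨A, hAE, hAfin, hAk, hpf⟩
    refine ⟨A \ edgesWithin G F, ?_, hAfin.sdiff,
      (Set.ncard_le_ncard Set.sdiff_subset hAfin).trans hAk,
      hpf.deleteEdges_edgesWithin_deleteEdges_sdiff hP hmeet⟩
    rw [SimpleGraph.edgeSet_deleteEdges]
    exact Set.sdiff_subset_sdiff_left hAE
  · rintro ⟨A, hAE, hAfin, hAk, hpf⟩
    rw [SimpleGraph.edgeSet_deleteEdges, Set.subset_sdiff] at hAE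
    exact ⟨A, hAE.1, hAfin, hAk, hpf.of_deleteEdges_edgesWithin_deleteEdges hP hmeet hAE.2⟩

/-- Safeness of Reduction Rule 3: let `F' ∈ cmd₃(G−S)` and let
`F ⊇ F'` be an inclusion-wise maximal set such that `G[F]` is complete multipartite
and every vertex outside `F` has neighbours in at most one class of `F`. Then for
every `k`, `(G,k)` is a yes-instance of Prison-Free Edge Deletion iff the instance
obtained by deleting all edges of `G[F]` is. -/
theorem rule_buble_safe {V : Type*} [Fintype V] (G : SimpleGraph V)
    (S : Set V) (F' : Set V) (hF' : Cmd G Sᶜ 3 F')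
    (F : Set V) (hsub : F' ⊆ F)
    (hcmp : ∃ P : Set (Set V), IsCMP G F P ∧
      ∀ v ∉ F, MeetsAtMostOneClass G P v)
    (hmax : ∀ F'' : Set V, F ⊆ F'' → F' ⊆ F'' →
      (∃ P : Set (Set V), IsCMP G F'' P ∧
        ∀ v ∉ F'', MeetsAtMostOneClass G P v) → F'' = F) :
    ∀ k : ℕ, DeletionYes G k ↔ DeletionYes (G.deleteEdges (edgesWithin G F)) k :=
  rule_buble_safe_general G F hcmp

end PrisonFreePaper
end
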